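/- Let ⪯ be a total preorder on an additive abelian group M compatible with addition and negation as above, let ν_1 ⪰ ν_2 ⪰ ... ⪰ ν_n be elements of M, and fix γ ∈ M. Let m̄ be the span in Matrix n n k of the elementary matrices e_{ij} with γ ≺ ν_i - ν_j (strict inequality, meaning γ ⪯ ν_i - ν_j and not ν_i - ν_j ⪯ γ). Then m̄ is closed under left and right multiplication by upper triangular matrices: if b is upper triangular and X ∈ m̄, then bX ∈ m̄ and Xb ∈ m̄. -/

import Mathlib

/-!
The span of the matrix units `e i j` with `γ ≺ νᵢ - νⱼ` consists of the matrices vanishing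
outside these positions. In `(b * X) i j = ∑ l, b i l * X l j` only `l ≥ i` contributes, and
there `X l j ≠ 0` forces `γ ≺ νₗ - νⱼ ⪯ νᵢ - νⱼ`; symmetrically for `X * b`,
using `νᵢ - νₗ ⪯ νᵢ - νⱼ` for `l ≤ j`.
-/

namespace Matrix

variable {m n R : Type*} [Fintype m] [Fintype n] [DecidableEq m] [DecidableEq n] [Semiring R]

theorem mem_span_single_iff (p : m → n → Prop) (X : Matrix m n R) :
    X ∈ Submodule.span R {A | ∃ i j, p i j ∧ A = single i j (1 : R)} ↔
      ∀ i j, ¬ p i j → X i j = 0 := by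
  constructor
  · intro hX
    induction hX using Submodule.span_induction with
    | mem A hA =>
      obtain ⟨i, j, hij, rfl⟩ := hA
      intro i' j' hp
      rw [single_apply_of_ne]
      rintro ⟨rfl, rfl⟩
      exact hp hij
    | zero => exact fun _ _ _ => rfl
    | add A B _ _ hA hB => exact fun i j hp => by simp [hA i j hp, hB i j hp]
    | smul c A _ hA => exact fun i j hp => by simp [hA i j hp]
  · intro hX
    rw [matrix_eq_sum_single X]
    refine Submodule.sum_mem _ fun i _ => Submodule.sum_mem _ fun j _ => ?_
    by_cases hp : p i j
    · rw [← mul_one (X i j), ← smul_eq_mul, ← smul_single]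
      exact Submodule.smul_mem _ _ (Submodule.subset_span ⟨i, j, hp, rfl⟩)
    · simp [hX i j hp]

end Matrix

namespace Matrix.IsUpperTriangular

variable {ι R : Type*} [Fintype ι] [DecidableEq ι] [LinearOrder ι] [Semiring R]
  {p : ι → ι → Prop} {b X : Matrix ι ι R}

theorem mul_mem_span_single (hb : b.IsUpperTriangular)
    (hp : ∀ i l j, i ≤ l → p l j → p i j)
    (hX : X ∈ Submodule.span R {A | ∃ i j, p i j ∧ A = single i j (1 : R)}) :
    b * X ∈ Submodule.span R {A | ∃ i j, p i j ∧ A = single i j (1 : R)} := by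
  rw [mem_span_single_iff] at hX ⊢
  intro i j hij
  rw [mul_apply]
  refine Finset.sum_eq_zero fun l _ => ?_
  rcases lt_or_ge l i with hli | hil
  · rw [hb hli, zero_mul]
  · rw [hX l j fun hlj => hij (hp i l j hil hlj), mul_zero]

theorem mem_span_single_mul (hb : b.IsUpperTriangular)
    (hp : ∀ i l j, l ≤ j → p i l → p i j)
    (hX : X ∈ Submodule.span R {A | ∃ i j, p i j ∧ A = single i j (1 : R)}) :
    X * b ∈ Submodule.span R {A | ∃ i j, p i j ∧ A = single i j (1 : R)} := by
  rw [mem_span_single_iff] at hX ⊢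
  intro i j hij
  rw [mul_apply]
  refine Finset.sum_eq_zero fun l _ => ?_
  rcases lt_or_ge j l with hjl | hlj
  · rw [hb hjl, mul_zero]
  · rw [hX i l fun hil => hij (hp i l j hlj hil), zero_mul]

end Matrix.IsUpperTriangular

section CompatibleRelation

variable {M : Type*} [AddCommGroup M] {r : M → M → Prop}

theorem rel_add_right (hrefl : ∀ β, r β β)
    (haddc : ∀ β γ β' γ', r β γ → r β' γ' → r (β + β') (γ + γ')) {a b : M} (hab : r a b)
    (c : M) : r (a + c) (b + c) :=
  haddc a b c c hab (hrefl c)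

theorem rel_sub_right (hrefl : ∀ β, r β β)
    (haddc : ∀ β γ β' γ', r β γ → r β' γ' → r (β + β') (γ + γ')) {a b : M} (hab : r a b)
    (c : M) : r (a - c) (b - c) := by
  simpa only [sub_eq_add_neg] using rel_add_right hrefl haddc hab (-c)

theorem rel_sub_left (hrefl : ∀ β, r β β)
    (haddc : ∀ β γ β' γ', r β γ → r β' γ' → r (β + β') (γ + γ')) {a b : M} (hab : r a b)
    (c : M) : r (c - b) (c - a) := by
  have h := rel_add_right hrefl haddc hab (c - a - b)
  rwa [show a + (c - a - b) = c - b by abel, show b + (c - a - b) = c - a by abel] at h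

end CompatibleRelation

theorem strictRel_of_strictRel_of_rel {α : Type*} {r : α → α → Prop}
    (htrans : ∀ β γ δ, r β γ → r γ δ → r β δ) {γ a b : α}
    (hγa : r γ a ∧ ¬ r a γ) (hab : r a b) : r γ b ∧ ¬ r b γ :=
  ⟨htrans _ _ _ hγa.1 hab, fun hbγ => hγa.2 (htrans _ _ _ hab hbγ)⟩

theorem span_stdBasisMatrix_mul_upper_triangular_general
    (k : Type*) [Field k] (M : Type*) [AddCommGroup M] (n : ℕ)
    (r : M → M → Prop)
    (hrefl : ∀ β : M, r β β)
    (htrans : ∀ β γ δ : M, r β γ → r γ δ → r β δ)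
    (haddc : ∀ β γ β' γ' : M, r β γ → r β' γ' → r (β + β') (γ + γ'))
    (ν : Fin n → M)
    (hdec : ∀ i j : Fin n, j ≤ i → r (ν i) (ν j))
    (γ : M)
    (m : Submodule k (Matrix (Fin n) (Fin n) k))
    (hm : m = Submodule.span k
      {A : Matrix (Fin n) (Fin n) k | ∃ i j : Fin n,
        (r γ (ν i - ν j) ∧ ¬ r (ν i - ν j) γ) ∧ A = Matrix.single i j (1 : k)}) :
    ∀ b : Matrix (Fin n) (Fin n) k, (∀ i j : Fin n, j < i → b i j = 0) →
      ∀ X ∈ m, b * X ∈ m ∧ X * b ∈ m := by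
  intro b hb X hX
  subst hm
  have hb : b.IsUpperTriangular := fun i j hji => hb i j hji
  refine ⟨hb.mul_mem_span_single (fun i l j hil h => ?_) hX,
    hb.mem_span_single_mul (fun i l j hlj h => ?_) hX⟩
  · exact strictRel_of_strictRel_of_rel htrans h (rel_sub_right hrefl haddc (hdec l i hil) _)
  · exact strictRel_of_strictRel_of_rel htrans h (rel_sub_left hrefl haddc (hdec j l hlj) _)

/-- Let `⪯` be a total preorder on an abelian group `M` compatible with addition and
negation, `ν₁ ⪰ ... ⪰ νₙ` elements of `M`, and `γ ∈ M`. The span of the matrix units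
`e i j` with `γ ≺ νᵢ - νⱼ` (strictly) is closed under left and right multiplication
by upper triangular matrices. -/
theorem span_stdBasisMatrix_mul_upper_triangular
    (k : Type*) [Field k] (M : Type*) [AddCommGroup M] (n : ℕ)
    (r : M → M → Prop)
    (hrefl : ∀ β : M, r β β)
    (htrans : ∀ β γ δ : M, r β γ → r γ δ → r β δ)
    (htotal : ∀ β γ : M, r β γ ∨ r γ β)
    (haddc : ∀ β γ β' γ' : M, r β γ → r β' γ' → r (β + β') (γ + γ'))
    (hneg : ∀ β γ : M, r β γ → r (-γ) (-β))
    (ν : Fin n → M)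
    (hdec : ∀ i j : Fin n, j ≤ i → r (ν i) (ν j))
    (γ : M)
    (m : Submodule k (Matrix (Fin n) (Fin n) k))
    (hm : m = Submodule.span k
      {A : Matrix (Fin n) (Fin n) k | ∃ i j : Fin n,
        (r γ (ν i - ν j) ∧ ¬ r (ν i - ν j) γ) ∧ A = Matrix.single i j (1 : k)}) :
    ∀ b : Matrix (Fin n) (Fin n) k, (∀ i j : Fin n, j < i → b i j = 0) →
      ∀ X ∈ m, b * X ∈ m ∧ X * b ∈ m :=
  span_stdBasisMatrix_mul_upper_triangular_general k M n r hrefl htrans haddc ν hdec γ m hm
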